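/- Let G be the m × m adjacency matrix of a simple graph, A = I + G, and for i ∈ [m] define the (m+3) × (m+3) row-stochastic matrix Q_i by: row 0 has entry 1 in column i (among columns 1..m); for j ∈ [m], row j has entry A_{j,i} in column m+1 and 1 - A_{j,i} in column m+2; rows m+1 and m+2 have entry 1 in column 0. For w ∈ Δ_[m] let Q_w = Σ_{i=1}^m w_i Q_i. Then any nonnegative vector ν = [x, v^T, y, z]^T (with x, y, z scalars and v an m-vector) satisfying the stationarity equation ν^T = ν^T Q_w must satisfy v = x·w and y = x·(w^T A w). -/

import Mathlib

open Matrix BigOperators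

/-- States `0, 1, …, m, m+1, m+2` of the hardness-reduction MDP (average-cost variant):
`start` is state `0`, `mid j` (for `j : Fin m`) are states `1, …, m`, `pre` is state `m+1`,
`last` is state `m+2`. -/
inductive HardState (m : ℕ) where
  | start : HardState m
  | mid : Fin m → HardState m
  | pre : HardState m
  | last : HardState m
  deriving DecidableEq, Fintype

/-- The chain `Q i` of the average-cost reduction: row `0` has a `1` in column `i` (among
columns `1..m`); row `j ∈ [m]` has `A j i` in column `m+1` and `1 - A j i` in column `m+2`;
rows `m+1` and `m+2` have a `1` in column `0`. -/
def hardChainAvg {m : ℕ} (A : Matrix (Fin m) (Fin m) ℝ) (i : Fin m) :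
    Matrix (HardState m) (HardState m) ℝ :=
  Matrix.of fun r s =>
    match r, s with
    | .start, .mid j => if j = i then 1 else 0
    | .mid j, .pre => A j i
    | .mid j, .last => 1 - A j i
    | .pre, .start => 1
    | .last, .start => 1
    | _, _ => 0

/-! Only two columns of `Q_w` matter: column `mid j` has the single nonzero entry `w j`, in row
`start`, and column `pre` has the entries `(A w) j` in the rows `mid j`. Stationarity at `mid j`
thus gives `ν (mid j) = ν start * w j`, and substituting this into stationarity at `pre` gives
`ν pre = ν start * (wᵀ A w)`. -/

namespace HardState

def equivSum (m : ℕ) : HardState m ≃ Fin m ⊕ Fin 3 where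
  toFun
    | .mid j => .inl j
    | .start => .inr 0
    | .pre => .inr 1
    | .last => .inr 2
  invFun := Sum.elim .mid ![.start, .pre, .last]
  left_inv s := by cases s <;> rfl
  right_inv
    | .inl _ => rfl
    | .inr i => by fin_cases i <;> rfl

theorem sum_eq {m : ℕ} {M : Type*} [AddCommMonoid M] (f : HardState m → M) :
    ∑ s, f s = f .start + f .pre + f .last + ∑ j, f (.mid j) := by
  rw [← (equivSum m).symm.sum_comp, Fintype.sum_sum_type, Fin.sum_univ_three, add_comm]
  simp [equivSum, add_assoc]

end HardState

section Mixture

variable {m : ℕ} (A : Matrix (Fin m) (Fin m) ℝ) (w : Fin m → ℝ)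

theorem sum_smul_hardChainAvg_apply_mid (r : HardState m) (j : Fin m) :
    (∑ i, w i • hardChainAvg A i) r (.mid j) = if r = .start then w j else 0 := by
  cases r <;> simp [Matrix.sum_apply, hardChainAvg]

theorem sum_smul_hardChainAvg_mid_pre (j : Fin m) :
    (∑ i, w i • hardChainAvg A i) (.mid j) .pre = (A *ᵥ w) j := by
  simp [Matrix.sum_apply, hardChainAvg, mulVec, dotProduct, mul_comm]

theorem sum_smul_hardChainAvg_apply_pre_of_ne_mid (r : HardState m) (hr : ∀ j, r ≠ .mid j) :
    (∑ i, w i • hardChainAvg A i) r .pre = 0 := by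
  cases r <;> simp_all [Matrix.sum_apply, hardChainAvg]

theorem vecMul_sum_smul_hardChainAvg_mid (ν : HardState m → ℝ) (j : Fin m) :
    vecMul ν (∑ i, w i • hardChainAvg A i) (.mid j) = ν .start * w j := by
  simp [vecMul, dotProduct, sum_smul_hardChainAvg_apply_mid]

theorem vecMul_sum_smul_hardChainAvg_pre (ν : HardState m → ℝ) :
    vecMul ν (∑ i, w i • hardChainAvg A i) .pre = ∑ j, ν (.mid j) * (A *ᵥ w) j := by
  simp [vecMul, dotProduct, HardState.sum_eq, sum_smul_hardChainAvg_mid_pre,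
    sum_smul_hardChainAvg_apply_pre_of_ne_mid]

end Mixture

theorem hardChainAvg_stationary_general {m : ℕ}
    (A : Matrix (Fin m) (Fin m) ℝ)
    (w : Fin m → ℝ)
    (ν : HardState m → ℝ)
    (hstat : Matrix.vecMul ν (∑ i, w i • hardChainAvg A i) = ν) :
    (∀ j : Fin m, ν (HardState.mid j) = ν HardState.start * w j) ∧
    ν HardState.pre = ν HardState.start * (w ⬝ᵥ A.mulVec w) := by
  have hmid (j : Fin m) : ν (.mid j) = ν .start * w j := by
    rw [← vecMul_sum_smul_hardChainAvg_mid A w ν j, hstat]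
  refine ⟨hmid, ?_⟩
  calc ν .pre = vecMul ν (∑ i, w i • hardChainAvg A i) .pre := by rw [hstat]
    _ = ∑ j, ν .start * w j * (A *ᵥ w) j := by simp only [vecMul_sum_smul_hardChainAvg_pre, hmid]
    _ = ν .start * (w ⬝ᵥ A *ᵥ w) := by simp only [dotProduct, Finset.mul_sum, mul_assoc]

/-- With `A = I + G` and `w` in the simplex, any nonnegative vector
`ν = [x, vᵀ, y, z]ᵀ` satisfying the stationarity equation `νᵀ = νᵀ Q_w` must satisfy
`v = x • w` and `y = x * (wᵀ A w)`. -/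
theorem hardChainAvg_stationary {m : ℕ}
    (G : Matrix (Fin m) (Fin m) ℝ) (hGsymm : G.IsSymm)
    (hG01 : ∀ i j, G i j = 0 ∨ G i j = 1) (hGdiag : ∀ i, G i i = 0)
    (A : Matrix (Fin m) (Fin m) ℝ) (hA : A = 1 + G)
    (w : Fin m → ℝ) (hwnonneg : ∀ i, 0 ≤ w i) (hwsum : ∑ i, w i = 1)
    (ν : HardState m → ℝ) (hνnonneg : ∀ s, 0 ≤ ν s)
    (hstat : Matrix.vecMul ν (∑ i, w i • hardChainAvg A i) = ν) :
    (∀ j : Fin m, ν (HardState.mid j) = ν HardState.start * w j) ∧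
    ν HardState.pre = ν HardState.start * (w ⬝ᵥ A.mulVec w) :=
  hardChainAvg_stationary_general A w ν hstat
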